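/- arXiv:1203.5136 — 2 statements merged into one kernel-verified Lean document; each statement's English description precedes it below -/
import Mathlib

section
/- Let ψ, φ be Schwartz functions on ℝ², A = diag(4,2), B = [[1,1],[0,1]]. Then for all integers j ≥ 0, |ℓ| ≤ 2^j, and all N > 2, there is a constant C (depending on ψ, φ, N) such that ∫_{ℝ²} |ψ(B^ℓ A^j (x-y))| |φ(2^(2j) y)| dy ≤ C · 2^(-3j) (1 + 2^j|x|)^(-N) for all x ∈ ℝ². -/
open MeasureTheory Metric Set Filter
noncomputable section

/-- `ℝ²` with the Euclidean norm. -/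
abbrev V2 := EuclideanSpace ℝ (Fin 2)

/-- the vector `(a, b) ∈ ℝ²`. -/
def v2 (a b : ℝ) : V2 := (WithLp.equiv 2 (Fin 2 → ℝ)).symm ![a, b]

/-- The action of `B^ℓ A^j` on `ℝ²` for `A = diag(4,2)`, `B = [[1,1],[0,1]]`:
`x ↦ (2^(2j) x₁ + 2^j ℓ x₂, 2^j x₂)`. -/
def BA (j : ℕ) (ℓ : ℤ) (x : V2) : V2 :=
  v2 ((2:ℝ)^(2*j) * x 0 + (2:ℝ)^j * (ℓ:ℝ) * x 1) ((2:ℝ)^j * x 1)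

/-- The action of `A^(-j) B^(-ℓ)` on `ℝ²` (the inverse of `BA j ℓ`). -/
def invBA (j : ℕ) (ℓ : ℤ) (x : V2) : V2 :=
  v2 (((2:ℝ)^(2*j))⁻¹ * (x 0 - (ℓ:ℝ) * x 1)) (((2:ℝ)^j)⁻¹ * x 1)

/-- embedding of `ℤ²` into `ℝ²`. -/
def vi (k : ℤ × ℤ) : V2 := v2 (k.1 : ℝ) (k.2 : ℝ)

lemma v2_apply0 (a b : ℝ) : (v2 a b) 0 = a := rfl
lemma v2_apply1 (a b : ℝ) : (v2 a b) 1 = b := rfl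
lemma v2_eta (x : V2) : v2 (x 0) (x 1) = x := by ext i; fin_cases i <;> rfl

lemma norm_v2_le (a b : ℝ) : ‖v2 a b‖ ≤ |a| + |b| := by
  rw [EuclideanSpace.norm_eq]
  have : ∑ i, ‖(v2 a b) i‖ ^ 2 = a^2 + b^2 := by
    simp [Fin.sum_univ_two, v2_apply0, v2_apply1, sq_abs]
  rw [this]
  nlinarith [Real.sq_sqrt (by positivity : (0:ℝ) ≤ a^2+b^2), Real.sqrt_nonneg (a^2+b^2),
    abs_nonneg a, abs_nonneg b, sq_abs a, sq_abs b]

lemma apply_le_norm (x : V2) (i : Fin 2) : |x i| ≤ ‖x‖ := by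
  rw [EuclideanSpace.norm_eq]
  have h1 : |x i|^2 ≤ ∑ i, ‖x i‖ ^ 2 := by
    fin_cases i <;> simp [Fin.sum_univ_two, sq_abs] <;> nlinarith [sq_nonneg (x 0), sq_nonneg (x 1)]
  nlinarith [Real.sq_sqrt (by positivity : (0:ℝ) ≤ ∑ i, ‖x i‖ ^ 2),
    Real.sqrt_nonneg (∑ i, ‖x i‖ ^ 2), abs_nonneg (x i), sq_abs (x i)]

lemma invBA_BA (j : ℕ) (ℓ : ℤ) (u : V2) : invBA j ℓ (BA j ℓ u) = u := by
  unfold invBA BA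
  rw [v2_apply0, v2_apply1]
  have hne : ((2:ℝ)^(2*j)) ≠ 0 := by positivity
  have hne2 : ((2:ℝ)^j) ≠ 0 := by positivity
  have e1 : ((2:ℝ)^(2*j))⁻¹ * (((2:ℝ)^(2*j) * u 0 + (2:ℝ)^j * (ℓ:ℝ) * u 1) - (ℓ:ℝ) * ((2:ℝ)^j * u 1)) = u 0 := by
    field_simp
    ring
  have e2 : ((2:ℝ)^j)⁻¹ * ((2:ℝ)^j * u 1) = u 1 := by field_simp
  rw [e1, e2, v2_eta]

lemma norm_invBA_le (j : ℕ) (ℓ : ℤ) (hl : |ℓ| ≤ 2^j) (z : V2) :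
    ‖invBA j ℓ z‖ ≤ 3 * ((2:ℝ)^j)⁻¹ * ‖z‖ := by
  have h0 := apply_le_norm z 0
  have h1 := apply_le_norm z 1
  have hl' : |(ℓ:ℝ)| ≤ (2:ℝ)^j := by
    rw [← Int.cast_abs]
    exact_mod_cast le_trans (by exact_mod_cast le_refl |ℓ|) (by exact_mod_cast hl)
  have hp : (0:ℝ) < (2:ℝ)^j := by positivity
  refine (norm_v2_le _ _).trans ?_
  have e1 : |((2:ℝ)^(2*j))⁻¹ * (z 0 - (ℓ:ℝ) * z 1)| ≤ ((2:ℝ)^(2*j))⁻¹ * (|z 0| + |(ℓ:ℝ)| * |z 1|) := by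
    rw [abs_mul, abs_of_nonneg (by positivity : (0:ℝ) ≤ ((2:ℝ)^(2*j))⁻¹)]
    gcongr
    calc |z 0 - (ℓ:ℝ) * z 1| ≤ |z 0| + |(ℓ:ℝ) * z 1| := abs_sub _ _
    _ = |z 0| + |(ℓ:ℝ)| * |z 1| := by rw [abs_mul]
  have e2 : |((2:ℝ)^j)⁻¹ * z 1| = ((2:ℝ)^j)⁻¹ * |z 1| := by
    rw [abs_mul, abs_of_nonneg (by positivity : (0:ℝ) ≤ ((2:ℝ)^j)⁻¹)]
  have key : ((2:ℝ)^(2*j))⁻¹ * (|z 0| + |(ℓ:ℝ)| * |z 1|) + ((2:ℝ)^j)⁻¹ * |z 1| ≤ 3 * ((2:ℝ)^j)⁻¹ * ‖z‖ := by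
    have h2j : ((2:ℝ)^(2*j))⁻¹ ≤ ((2:ℝ)^j)⁻¹ := by
      apply inv_anti₀ hp
      apply pow_le_pow_right₀ (by norm_num)
      omega
    have hL : ((2:ℝ)^(2*j))⁻¹ * |(ℓ:ℝ)| ≤ ((2:ℝ)^j)⁻¹ := by
      rw [two_mul, pow_add, mul_inv]
      calc ((2:ℝ)^j)⁻¹ * ((2:ℝ)^j)⁻¹ * |(ℓ:ℝ)| ≤ ((2:ℝ)^j)⁻¹ * ((2:ℝ)^j)⁻¹ * (2:ℝ)^j := by
            gcongr
      _ = ((2:ℝ)^j)⁻¹ := by field_simp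
    have hz0 : |z 0| ≤ ‖z‖ := h0
    have hz1 : |z 1| ≤ ‖z‖ := h1
    have hn : (0:ℝ) ≤ ‖z‖ := norm_nonneg z
    nlinarith [mul_le_mul_of_nonneg_right h2j (abs_nonneg (z 0)),
      mul_le_mul_of_nonneg_right hL (abs_nonneg (z 1)),
      mul_le_mul_of_nonneg_left hz0 (le_of_lt (inv_pos.2 hp)),
      mul_le_mul_of_nonneg_left hz1 (le_of_lt (inv_pos.2 hp)),
      inv_pos.2 hp]
  linarith [e1, le_of_eq e2]

lemma norm_BA_ge (j : ℕ) (ℓ : ℤ) (hl : |ℓ| ≤ 2^j) (u : V2) :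
    (2:ℝ)^j * ‖u‖ ≤ 3 * ‖BA j ℓ u‖ := by
  have := norm_invBA_le j ℓ hl (BA j ℓ u)
  rw [invBA_BA] at this
  have hp : (0:ℝ) < (2:ℝ)^j := by positivity
  calc (2:ℝ)^j * ‖u‖ ≤ (2:ℝ)^j * (3 * ((2:ℝ)^j)⁻¹ * ‖BA j ℓ u‖) := by gcongr
  _ = 3 * ‖BA j ℓ u‖ := by field_simp

lemma schwartz_bound (f : SchwartzMap V2 ℂ) (k : ℕ) :
    ∃ C, 0 < C ∧ ∀ x, (1+‖x‖)^k * ‖f x‖ ≤ C := by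
  set S := (Finset.Iic (k,0)).sup (fun m => SchwartzMap.seminorm ℝ m.1 m.2) f with hS
  have hS0 : 0 ≤ S := by rw [hS]; exact apply_nonneg _ f
  refine ⟨2^k * S + 1, by positivity, fun x => ?_⟩
  have := SchwartzMap.one_add_le_sup_seminorm_apply (𝕜 := ℝ) (m := (k,0)) le_rfl le_rfl f x
  rw [norm_iteratedFDeriv_zero] at this
  linarith

lemma integrable_h : Integrable (fun y : V2 => ((1+‖y‖)^3)⁻¹) := by
  have : ∀ y : V2, ((1+‖y‖)^3)⁻¹ = (1+‖y‖) ^ (-(3:ℝ)) := by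
    intro y
    rw [Real.rpow_neg (by positivity), ← Real.rpow_natCast (1+‖y‖) 3]
    norm_num
  simp_rw [this]
  exact integrable_one_add_norm (by norm_num : ((Module.finrank ℝ V2 : ℝ)) < 3)

/-- for Schwartz `ψ, φ` on `ℝ²`, `j ≥ 0`, `|ℓ| ≤ 2^j` and `N > 2`,
`∫ |ψ(B^ℓ A^j(x-y))| |φ(2^(2j) y)| dy ≤ C 2^(-3j) (1+2^j|x|)^(-N)`. -/
theorem stmt5 (ψ φ : SchwartzMap V2 ℂ) (N : ℝ) (hN : N > 2) :
    ∃ C > 0, ∀ (j : ℕ) (ℓ : ℤ), |ℓ| ≤ 2^j → ∀ x : V2,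
      (∫ y : V2, ‖ψ (BA j ℓ (x - y))‖ * ‖φ ((2:ℝ)^(2*j) • y)‖) ≤
        C * ((2:ℝ)^(3*j))⁻¹ * (1 + (2:ℝ)^j * ‖x‖) ^ (-N) := by
  set k : ℕ := ⌈N⌉₊ with hk
  have hNk : N ≤ (k : ℝ) := Nat.le_ceil N
  obtain ⟨C₁, hC₁pos, hC₁⟩ := schwartz_bound ψ k
  obtain ⟨C₂, hC₂pos, hC₂⟩ := schwartz_bound φ (k+3)
  set K : ℝ := ∫ y : V2, ((1+‖y‖)^3)⁻¹ with hK
  have hK0 : 0 ≤ K := integral_nonneg fun y => by positivity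
  refine ⟨3^k * C₁ * C₂ * (K+1), by positivity, fun j ℓ hl x => ?_⟩
  have hp : (0:ℝ) < (2:ℝ)^j := by positivity
  have hp2 : (0:ℝ) < (2:ℝ)^(2*j) := by positivity
  set X : ℝ := (2:ℝ)^j * ‖x‖ with hX
  have hX0 : 0 ≤ X := by positivity
  have hX1 : (0:ℝ) < 1 + X := by linarith
  -- pointwise bound
  have hpt : ∀ y : V2, ‖ψ (BA j ℓ (x - y))‖ * ‖φ ((2:ℝ)^(2*j) • y)‖ ≤
      (3^k * C₁ * C₂ * ((1+X)^k)⁻¹) * ((1 + (2:ℝ)^(2*j) * ‖y‖)^3)⁻¹ := by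
    intro y
    set a := BA j ℓ (x - y) with ha
    set s : ℝ := (2:ℝ)^(2*j) * ‖y‖ with hs
    have hs0 : 0 ≤ s := by positivity
    have hs1 : (0:ℝ) < 1 + s := by linarith
    have ha1 : (0:ℝ) < 1 + ‖a‖ := by positivity
    have hnb : ‖(2:ℝ)^(2*j) • y‖ = s := by
      rw [norm_smul, Real.norm_eq_abs, abs_of_pos hp2]
    -- 1 + X ≤ 3 (1+‖a‖)(1+s)
    have peetre : 1 + X ≤ 3 * ((1+‖a‖) * (1+s)) := by
      have h1 : (2:ℝ)^j * ‖x - y‖ ≤ 3 * ‖a‖ := norm_BA_ge j ℓ hl (x - y)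
      have h2 : ‖x‖ ≤ ‖x - y‖ + ‖y‖ := by
        calc ‖x‖ = ‖(x - y) + y‖ := by rw [sub_add_cancel]
        _ ≤ ‖x - y‖ + ‖y‖ := norm_add_le _ _
      have h3 : (2:ℝ)^j * ‖y‖ ≤ s := by
        rw [hs]
        have hle : (2:ℝ)^j ≤ (2:ℝ)^(2*j) := by
          apply pow_le_pow_right₀ (by norm_num)
          omega
        exact mul_le_mul_of_nonneg_right hle (norm_nonneg y)
      have h4 : X ≤ 3 * ‖a‖ + s := by
        calc X ≤ (2:ℝ)^j * ‖x - y‖ + (2:ℝ)^j * ‖y‖ := by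
              rw [hX]; nlinarith
        _ ≤ 3 * ‖a‖ + s := by linarith
      nlinarith [norm_nonneg a]
    have peetre_pow : (1 + X)^k ≤ 3^k * ((1+‖a‖)^k * (1+s)^k) := by
      calc (1 + X)^k ≤ (3 * ((1+‖a‖) * (1+s)))^k := by
            apply pow_le_pow_left₀ (by linarith) peetre
      _ = 3^k * ((1+‖a‖)^k * (1+s)^k) := by rw [mul_pow, mul_pow]
    -- main multiplicative estimate
    have key : (1 + X)^k * (1+s)^3 * (‖ψ a‖ * ‖φ ((2:ℝ)^(2*j) • y)‖) ≤ 3^k * C₁ * C₂ := by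
      have b1 : (1+‖a‖)^k * ‖ψ a‖ ≤ C₁ := hC₁ a
      have b2 : (1+s)^(k+3) * ‖φ ((2:ℝ)^(2*j) • y)‖ ≤ C₂ := by
        have := hC₂ ((2:ℝ)^(2*j) • y)
        rwa [hnb] at this
      have hψ0 : 0 ≤ ‖ψ a‖ := norm_nonneg _
      have hφ0 : 0 ≤ ‖φ ((2:ℝ)^(2*j) • y)‖ := norm_nonneg _
      calc (1 + X)^k * (1+s)^3 * (‖ψ a‖ * ‖φ ((2:ℝ)^(2*j) • y)‖)
          ≤ (3^k * ((1+‖a‖)^k * (1+s)^k)) * (1+s)^3 * (‖ψ a‖ * ‖φ ((2:ℝ)^(2*j) • y)‖) := by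
            gcongr
      _ = 3^k * (((1+‖a‖)^k * ‖ψ a‖) * ((1+s)^(k+3) * ‖φ ((2:ℝ)^(2*j) • y)‖)) := by
            rw [pow_add]; ring
      _ ≤ 3^k * (C₁ * C₂) :=
            mul_le_mul_of_nonneg_left (mul_le_mul b1 b2 (by positivity) hC₁pos.le) (by positivity)
      _ = 3^k * C₁ * C₂ := by ring
    have hXk : (0:ℝ) < (1+X)^k := by positivity
    have hsk : (0:ℝ) < (1+s)^3 := by positivity
    have hpos : (0:ℝ) < (1+X)^k * (1+s)^3 := by positivity
    have hrw : (3:ℝ)^k * C₁ * C₂ * ((1+X)^k)⁻¹ * ((1+s)^3)⁻¹ =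
        (3^k*C₁*C₂) / ((1+X)^k * (1+s)^3) := by
      field_simp
    rw [hrw, le_div_iff₀ hpos, mul_comm]
    exact key
  -- integrability of the majorant
  have hR : ((2:ℝ)^(2*j)) ≠ 0 := ne_of_gt hp2
  have hcomp : Integrable (fun y : V2 => ((1 + (2:ℝ)^(2*j) * ‖y‖)^3)⁻¹) := by
    have := (integrable_h).comp_smul (μ := volume) hR
    have heq : (fun y : V2 => ((1 + ‖(2:ℝ)^(2*j) • y‖)^3)⁻¹) =
        (fun y : V2 => ((1 + (2:ℝ)^(2*j) * ‖y‖)^3)⁻¹) := by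
      funext y
      rw [norm_smul, Real.norm_eq_abs, abs_of_pos hp2]
    rwa [heq] at this
  have hmaj : Integrable (fun y : V2 =>
      (3^k * C₁ * C₂ * ((1+X)^k)⁻¹) * ((1 + (2:ℝ)^(2*j) * ‖y‖)^3)⁻¹) := hcomp.const_mul _
  -- the value of the scaled integral
  have hval : (∫ y : V2, ((1 + (2:ℝ)^(2*j) * ‖y‖)^3)⁻¹) = (((2:ℝ)^(2*j))^2)⁻¹ * K := by
    have heq : (fun y : V2 => ((1 + (2:ℝ)^(2*j) * ‖y‖)^3)⁻¹) =
        (fun y : V2 => ((1 + ‖(2:ℝ)^(2*j) • y‖)^3)⁻¹) := by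
      funext y
      rw [norm_smul, Real.norm_eq_abs, abs_of_pos hp2]
    rw [heq]
    have := Measure.integral_comp_smul_of_nonneg (volume)
      (fun y : V2 => ((1 + ‖y‖)^3)⁻¹) ((2:ℝ)^(2*j)) (hR := hp2.le)
    rw [this]
    have : Module.finrank ℝ V2 = 2 := by simp
    rw [this, smul_eq_mul]
  -- compare integrals
  calc (∫ y : V2, ‖ψ (BA j ℓ (x - y))‖ * ‖φ ((2:ℝ)^(2*j) • y)‖)
      ≤ ∫ y : V2, (3^k * C₁ * C₂ * ((1+X)^k)⁻¹) * ((1 + (2:ℝ)^(2*j) * ‖y‖)^3)⁻¹ := by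
        apply integral_mono_of_nonneg
        · exact ae_of_all _ fun y => by positivity
        · exact hmaj
        · exact ae_of_all _ hpt
  _ = (3^k * C₁ * C₂ * ((1+X)^k)⁻¹) * ((((2:ℝ)^(2*j))^2)⁻¹ * K) := by
        rw [integral_const_mul, hval]
  _ ≤ (3^k * C₁ * C₂ * (1+X)^(-N)) * (((2:ℝ)^(3*j))⁻¹ * (K+1)) := by
        have e1 : ((1+X)^k)⁻¹ ≤ (1+X)^(-N) := by
          have hxk : ((1+X)^k)⁻¹ = (1+X)^(-(k:ℝ)) := by
            rw [← Real.rpow_natCast (1+X) k, ← Real.rpow_neg hX1.le]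
          rw [hxk]
          exact Real.rpow_le_rpow_of_exponent_le (by linarith) (by linarith)
        have e2 : (((2:ℝ)^(2*j))^2)⁻¹ ≤ ((2:ℝ)^(3*j))⁻¹ := by
          rw [← pow_mul]
          apply inv_anti₀ (by positivity)
          apply pow_le_pow_right₀ (by norm_num)
          omega
        have hrp : (0:ℝ) < (1+X)^(-N) := Real.rpow_pos_of_pos hX1 _
        apply mul_le_mul
        · gcongr
        · gcongr
          linarith
        · positivity
        · positivity
  _ = 3^k * C₁ * C₂ * (K+1) * ((2:ℝ)^(3*j))⁻¹ * (1 + (2:ℝ)^j * ‖x‖) ^ (-N) := by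
        rw [hX]; ring
end
end

section
/- Let α₁, α₂ ∈ ℝ, 0 < q₂ ≤ ∞, 0 < p₁, p₂ < ∞ with 2α₁ − 4/p₁ > 3α₂ + 1/q₂ − 1/p₂. Let ψ, φ ∈ S(ℝ²), A = diag(4,2), B = [[1,1],[0,1]]. Define f^(2j)(x) = s_{2j,0} 2^(2j) φ(2^(2j) x) with |s_{2j,0}| = 2^(-4j(α₁/2 − 1/p₁ + 1/2)). Then the quantity ‖(∑_{|ℓ|≤2^j} (2^(3jα₂) |f^(2j) ∗ ψ_{A^(-j)B^(-ℓ)}|)^{q₂})^{1/q₂}‖_{L^{p₂}} is bounded by C · 2^{j(3α₂ − 2α₁ + 4/p₁ + 1/q₂ − 1/p₂)} and hence tends to 0 as j → ∞. -/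
/-!
Up to the factor `s_{2j,0}`, the convolution `f^(2j) ∗ ψ_{A^(-j)B^(-ℓ)}(x)` equals
`2^(2j) 8^j ∫ φ(2^(2j) t) ψ(B^ℓ A^j (x - t)) dt`. For `|ℓ| ≤ 2^j` the map `B^ℓ A^j` expands
every vector by at least `2^j / 3`, so the decay of `ψ` together with Peetre's inequality
`1 + 2^j |x| ≤ (1 + 2^(2j) |t|) (1 + 2^j |x - t|)` bounds the integrand by a multiple of
`(1 + 2^(2j) |t|)^(-3) (1 + 2^j |x|)^(-N)`. Integrating in `t` gains `2^(-4j)`, so every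
convolution is `≲ |s_{2j,0}| 2^j (1 + 2^j |x|)^(-N)`. The `ℓ^{q₂}` sum over the `≲ 2^j` shears
costs `2^(j/q₂)`, and the `L^{p₂}` norm of `(1 + 2^j |x|)^(-N)` is `≲ 2^(-2j/p₂)` once `N p₂ > 2`.
The resulting exponent `j (3α₂ − 2α₁ + 4/p₁ + 1/q₂ − 1 − 2/p₂)` is below the claimed one, which
is negative by hypothesis.
-/

open MeasureTheory Metric Set Filter
noncomputable section

/-- `ψ_{A^(-j)B^(-ℓ)}(x) = 8^j ψ(B^ℓ A^j x)`. -/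
def dilA (ψ : V2 → ℂ) (j : ℕ) (ℓ : ℤ) (x : V2) : ℂ :=
  ((8:ℝ)^j : ℝ) * ψ (BA j ℓ x)

/-- `f^(2j)(x) = s_{2j,0} 2^(2j) φ(2^(2j) x)`. -/
def fj (φ : V2 → ℂ) (s : ℕ → ℂ) (j : ℕ) (x : V2) : ℂ :=
  s j * ((2:ℝ)^(2*j) : ℝ) * φ ((2:ℝ)^(2*j) • x)

/-- The quantity `‖(∑_{|ℓ|≤2^j} (2^(3jα₂) |f^(2j) ∗ ψ_{A^(-j)B^(-ℓ)}|)^{q₂})^{1/q₂}‖_{L^{p₂}}`. -/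
def normQ (ψ φ : V2 → ℂ) (s : ℕ → ℂ) (α2 q2 p2 : ℝ) (j : ℕ) : ℝ :=
  (∫ x : V2,
    ((∑ ℓ ∈ Finset.Icc (-(2:ℤ)^j) (2^j),
        ((2:ℝ) ^ (3*(j:ℝ)*α2) *
          ‖convolution (fj φ s j) (dilA ψ j ℓ) (ContinuousLinearMap.mul ℂ ℂ) volume x‖)
          ^ q2) ^ (1/q2)) ^ p2) ^ (1/p2)

open scoped SchwartzMap
open Module (finrank)

section Weight

variable {E : Type*} [SeminormedAddCommGroup E]

lemma one_add_mul_norm_le_mul {c c' : ℝ} (hc : 0 ≤ c) (hcc' : c ≤ c') (x t : E) :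
    1 + c * ‖x‖ ≤ (1 + c' * ‖t‖) * (1 + c * ‖x - t‖) := by
  have htri : ‖x‖ ≤ ‖t‖ + ‖x - t‖ := by simpa using norm_add_le t (x - t)
  nlinarith [norm_nonneg t, mul_nonneg (mul_nonneg (hc.trans hcc') hc)
    (mul_nonneg (norm_nonneg t) (norm_nonneg (x - t)))]

lemma one_add_mul_norm_sub_rpow_neg_le {c c' r : ℝ} (hc : 0 ≤ c) (hcc' : c ≤ c') (hr : 0 ≤ r)
    (x t : E) : (1 + c * ‖x - t‖) ^ (-r) ≤ (1 + c' * ‖t‖) ^ r * (1 + c * ‖x‖) ^ (-r) := by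
  have hc' : 0 ≤ c' := hc.trans hcc'
  have h := Real.rpow_le_rpow (by positivity) (one_add_mul_norm_le_mul hc hcc' x t) hr
  rw [Real.mul_rpow (by positivity) (by positivity)] at h
  rw [Real.rpow_neg (by positivity), Real.rpow_neg (by positivity), ← div_eq_mul_inv,
    le_div_iff₀ (by positivity), inv_mul_le_iff₀ (by positivity)]
  linarith

end Weight

lemma SchwartzMap.exists_norm_le_mul_one_add_norm_rpow_neg {E F : Type*} [NormedAddCommGroup E]
    [NormedSpace ℝ E] [NormedAddCommGroup F] [NormedSpace ℝ F] (f : 𝓢(E, F)) (r : ℝ) :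
    ∃ C, 0 ≤ C ∧ ∀ x, ‖f x‖ ≤ C * (1 + ‖x‖) ^ (-r) := by
  set k := ⌈r⌉₊
  refine ⟨2 ^ k * (Finset.Iic (k, 0)).sup (fun m => SchwartzMap.seminorm ℝ m.1 m.2) f,
    by positivity, fun x => ?_⟩
  have hdecay : ‖f x‖ ≤ 2 ^ k * (Finset.Iic (k, 0)).sup
      (fun m => SchwartzMap.seminorm ℝ m.1 m.2) f * (1 + ‖x‖) ^ (-(k : ℝ)) := by
    rw [Real.rpow_neg (by positivity), ← div_eq_mul_inv, le_div_iff₀ (by positivity),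
      Real.rpow_natCast, mul_comm]
    simpa using one_add_le_sup_seminorm_apply (𝕜 := ℝ) (m := (k, 0)) le_rfl le_rfl f x
  refine hdecay.trans (mul_le_mul_of_nonneg_left ?_ (by positivity))
  exact Real.rpow_le_rpow_of_exponent_le (by simp) (neg_le_neg (Nat.le_ceil r))

section Scaling

variable {E : Type*} [NormedAddCommGroup E] [NormedSpace ℝ E] [FiniteDimensional ℝ E]
  [MeasurableSpace E] [BorelSpace E] (μ : Measure E) [μ.IsAddHaarMeasure]

lemma integrable_one_add_mul_norm_rpow_neg {c r : ℝ} (hc : 0 < c) (hr : finrank ℝ E < r) :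
    Integrable (fun t : E => (1 + c * ‖t‖) ^ (-r)) μ := by
  refine ((integrable_comp_smul_iff μ (fun t : E => (1 + ‖t‖) ^ (-r)) hc.ne').2
    (integrable_one_add_norm hr)).congr (Eventually.of_forall fun t => ?_)
  simp only [norm_smul, Real.norm_eq_abs, abs_of_pos hc]

lemma integral_one_add_mul_norm_rpow_neg {c : ℝ} (hc : 0 ≤ c) (r : ℝ) :
    ∫ t, (1 + c * ‖t‖) ^ (-r) ∂μ = (c ^ finrank ℝ E)⁻¹ * ∫ t, (1 + ‖t‖) ^ (-r) ∂μ := by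
  have h := μ.integral_comp_smul_of_nonneg (fun t : E => (1 + ‖t‖) ^ (-r)) c (hR := hc)
  simp only [norm_smul, Real.norm_eq_abs, abs_of_nonneg hc, smul_eq_mul] at h
  exact h

lemma rpow_integral_rpow_le {G : E → ℝ} (hG0 : ∀ x, 0 ≤ G x) {A c N p : ℝ} (hA : 0 ≤ A)
    (hc : 0 < c) (hp : 0 < p) (hNp : finrank ℝ E < N * p)
    (hG : ∀ x, G x ≤ A * (1 + c * ‖x‖) ^ (-N)) :
    (∫ x, G x ^ p ∂μ) ^ (1 / p) ≤
      A * ((c ^ finrank ℝ E)⁻¹ * ∫ x, (1 + ‖x‖) ^ (-(N * p)) ∂μ) ^ (1 / p) := by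
  have hpt : ∀ x, G x ^ p ≤ A ^ p * (1 + c * ‖x‖) ^ (-(N * p)) := fun x => by
    calc G x ^ p ≤ (A * (1 + c * ‖x‖) ^ (-N)) ^ p := Real.rpow_le_rpow (hG0 x) (hG x) hp.le
      _ = _ := by rw [Real.mul_rpow hA (by positivity), ← Real.rpow_mul (by positivity), neg_mul]
  have hint : ∫ x, G x ^ p ∂μ ≤
      A ^ p * ((c ^ finrank ℝ E)⁻¹ * ∫ x, (1 + ‖x‖) ^ (-(N * p)) ∂μ) := by
    rw [← integral_one_add_mul_norm_rpow_neg μ hc.le, ← integral_const_mul]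
    exact integral_mono_of_nonneg (Eventually.of_forall fun x => by have := hG0 x; positivity)
      ((integrable_one_add_mul_norm_rpow_neg μ hc hNp).const_mul _) (Eventually.of_forall hpt)
  calc (∫ x, G x ^ p ∂μ) ^ (1 / p)
      ≤ (A ^ p * ((c ^ finrank ℝ E)⁻¹ * ∫ x, (1 + ‖x‖) ^ (-(N * p)) ∂μ)) ^ (1 / p) :=
        Real.rpow_le_rpow (integral_nonneg fun x => by have := hG0 x; positivity) hint
          (by positivity)
    _ = _ := by
        rw [Real.mul_rpow (by positivity) (by positivity), ← Real.rpow_mul hA,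
          mul_one_div_cancel hp.ne', Real.rpow_one]

end Scaling

lemma rpow_sum_rpow_le {ι : Type*} (S : Finset ι) {a : ι → ℝ} {b q : ℝ} (hq : 0 < q)
    (ha : ∀ i ∈ S, 0 ≤ a i) (hab : ∀ i ∈ S, a i ≤ b) (hb : 0 ≤ b) :
    (∑ i ∈ S, a i ^ q) ^ (1 / q) ≤ (S.card : ℝ) ^ (1 / q) * b := by
  have hsum : ∑ i ∈ S, a i ^ q ≤ S.card * b ^ q := by
    simpa using Finset.sum_le_card_nsmul S _ _ fun i hi =>
      Real.rpow_le_rpow (ha i hi) (hab i hi) hq.le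
  calc (∑ i ∈ S, a i ^ q) ^ (1 / q)
      ≤ (S.card * b ^ q) ^ (1 / q) :=
        Real.rpow_le_rpow (Finset.sum_nonneg fun i hi => Real.rpow_nonneg (ha i hi) _) hsum
          (by positivity)
    _ = (S.card : ℝ) ^ (1 / q) * b := by
        rw [Real.mul_rpow (by positivity) (by positivity), ← Real.rpow_mul hb,
          mul_one_div_cancel hq.ne', Real.rpow_one]

lemma tendsto_two_rpow_natCast_mul_nhds_zero {a : ℝ} (ha : a < 0) :
    Tendsto (fun j : ℕ => (2:ℝ) ^ ((j:ℝ) * a)) atTop (nhds 0) := by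
  refine (tendsto_pow_atTop_nhds_zero_of_lt_one (Real.rpow_nonneg zero_le_two a)
    (Real.rpow_lt_one_of_one_lt_of_neg one_lt_two ha)).congr fun j => ?_
  rw [← Real.rpow_natCast, ← Real.rpow_mul zero_le_two, mul_comm]

lemma norm_le_abs_add_abs (z : V2) : ‖z‖ ≤ |z 0| + |z 1| := by
  rw [EuclideanSpace.norm_eq, Fin.sum_univ_two, Real.sqrt_le_iff]
  refine ⟨by positivity, ?_⟩
  simp only [Real.norm_eq_abs, sq_abs]
  nlinarith [abs_nonneg (z 0), abs_nonneg (z 1), sq_abs (z 0), sq_abs (z 1)]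

lemma BA_apply_zero (j : ℕ) (ℓ : ℤ) (z : V2) :
    BA j ℓ z 0 = 2 ^ (2 * j) * z 0 + 2 ^ j * ℓ * z 1 := rfl

lemma BA_apply_one (j : ℕ) (ℓ : ℤ) (z : V2) : BA j ℓ z 1 = 2 ^ j * z 1 := rfl

lemma mul_norm_le_three_mul_norm_BA {j : ℕ} {ℓ : ℤ} (hℓ : |(ℓ:ℝ)| ≤ 2 ^ j) (z : V2) :
    2 ^ j * ‖z‖ ≤ 3 * ‖BA j ℓ z‖ := by
  set P : ℝ := 2 ^ j
  have hP1 : 1 ≤ P := one_le_pow₀ one_le_two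
  have hP : 0 < P := by positivity
  set w := BA j ℓ z
  have hw0 : |w 0| ≤ ‖w‖ := by simpa using PiLp.norm_apply_le w 0
  have hw1 : |w 1| ≤ ‖w‖ := by simpa using PiLp.norm_apply_le w 1
  have hz1 : P * |z 1| = |w 1| := by
    rw [BA_apply_one, abs_mul, abs_of_pos hP]
  have hz0 : P * (P * |z 0|) ≤ |w 0| + P * |w 1| := by
    have h : P * (P * z 0) = w 0 - ℓ * w 1 := by
      rw [BA_apply_zero, BA_apply_one]; simp only [P]; ring
    calc P * (P * |z 0|) = |w 0 - ℓ * w 1| := by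
          rw [← h, abs_mul, abs_mul, abs_of_pos hP]
      _ ≤ |w 0| + |(ℓ:ℝ)| * |w 1| := by
          rw [← abs_mul]; exact abs_sub _ _
      _ ≤ |w 0| + P * |w 1| := by gcongr
  have hz0' : P * |z 0| ≤ 2 * ‖w‖ := by
    rw [← mul_le_mul_iff_right₀ hP]
    linarith [mul_le_mul_of_nonneg_left hw1 hP.le, le_mul_of_one_le_left (norm_nonneg w) hP1]
  calc P * ‖z‖ ≤ P * |z 0| + P * |z 1| := by
        rw [← mul_add]; exact mul_le_mul_of_nonneg_left (norm_le_abs_add_abs z) hP.le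
    _ ≤ 3 * ‖w‖ := by linarith

lemma one_add_norm_BA_rpow_neg_le {j : ℕ} {ℓ : ℤ} (hℓ : |(ℓ:ℝ)| ≤ 2 ^ j) {N : ℝ} (hN : 0 ≤ N)
    (z : V2) : (1 + ‖BA j ℓ z‖) ^ (-N) ≤ 3 ^ N * (1 + 2 ^ j * ‖z‖) ^ (-N) := by
  have h : 1 + 2 ^ j * ‖z‖ ≤ 3 * (1 + ‖BA j ℓ z‖) := by
    linarith [mul_norm_le_three_mul_norm_BA hℓ z]
  calc (1 + ‖BA j ℓ z‖) ^ (-N) = 3 ^ N * (3 * (1 + ‖BA j ℓ z‖)) ^ (-N) := by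
        rw [Real.mul_rpow (by norm_num) (by positivity), ← mul_assoc, ← Real.rpow_add three_pos,
          add_neg_cancel, Real.rpow_zero, one_mul]
    _ ≤ 3 ^ N * (1 + 2 ^ j * ‖z‖) ^ (-N) :=
        mul_le_mul_of_nonneg_left (Real.rpow_le_rpow_of_nonpos (by positivity) h
          (neg_nonpos.2 hN)) (by positivity)

lemma exists_integral_norm_mul_norm_BA_le (ψ φ : 𝓢(V2, ℂ)) {N : ℝ} (hN : 0 ≤ N) :
    ∃ K, 0 ≤ K ∧ ∀ (j : ℕ) (ℓ : ℤ), |(ℓ:ℝ)| ≤ 2 ^ j → ∀ x : V2,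
      ∫ t, ‖φ ((2:ℝ) ^ (2 * j) • t)‖ * ‖ψ (BA j ℓ (x - t))‖ ≤
        K * (((2:ℝ) ^ (2 * j)) ^ 2)⁻¹ * (1 + 2 ^ j * ‖x‖) ^ (-N) := by
  obtain ⟨Cφ, hCφ, hφ⟩ := φ.exists_norm_le_mul_one_add_norm_rpow_neg (N + 3)
  obtain ⟨Cψ, hCψ, hψ⟩ := ψ.exists_norm_le_mul_one_add_norm_rpow_neg N
  set I := ∫ t : V2, (1 + ‖t‖) ^ (-(3:ℝ))
  refine ⟨Cφ * Cψ * 3 ^ N * I, by positivity, fun j ℓ hℓ x => ?_⟩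
  set P : ℝ := 2 ^ j
  set Q : ℝ := 2 ^ (2 * j)
  have hQ : 0 < Q := by positivity
  have hPQ : P ≤ Q := pow_le_pow_right₀ one_le_two (by omega)
  set W := (1 + P * ‖x‖) ^ (-N)
  have hpt : ∀ t, ‖φ (Q • t)‖ * ‖ψ (BA j ℓ (x - t))‖ ≤
      Cφ * Cψ * 3 ^ N * W * (1 + Q * ‖t‖) ^ (-(3:ℝ)) := by
    intro t
    have hφt : ‖φ (Q • t)‖ ≤ Cφ * (1 + Q * ‖t‖) ^ (-(N + 3)) := by
      simpa [norm_smul, abs_of_pos hQ] using hφ (Q • t)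
    have hψt : ‖ψ (BA j ℓ (x - t))‖ ≤ Cψ * (3 ^ N * ((1 + Q * ‖t‖) ^ N * W)) :=
      (hψ _).trans <| mul_le_mul_of_nonneg_left ((one_add_norm_BA_rpow_neg_le hℓ hN _).trans <|
        mul_le_mul_of_nonneg_left
          (one_add_mul_norm_sub_rpow_neg_le (by positivity) hPQ hN x t) (by positivity)) hCψ
    have hsplit : (1 + Q * ‖t‖) ^ (-(N + 3)) * (1 + Q * ‖t‖) ^ N = (1 + Q * ‖t‖) ^ (-(3:ℝ)) := by
      rw [← Real.rpow_add (by positivity)]; ring_nf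
    calc ‖φ (Q • t)‖ * ‖ψ (BA j ℓ (x - t))‖
        ≤ (Cφ * (1 + Q * ‖t‖) ^ (-(N + 3))) * (Cψ * (3 ^ N * ((1 + Q * ‖t‖) ^ N * W))) :=
          mul_le_mul hφt hψt (norm_nonneg _) (by positivity)
      _ = Cφ * Cψ * 3 ^ N * W * (1 + Q * ‖t‖) ^ (-(3:ℝ)) := by rw [← hsplit]; ring
  have hint : Integrable (fun t : V2 => (1 + Q * ‖t‖) ^ (-(3:ℝ))) :=
    integrable_one_add_mul_norm_rpow_neg volume hQ (by norm_num)
  calc ∫ t, ‖φ (Q • t)‖ * ‖ψ (BA j ℓ (x - t))‖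
      ≤ ∫ t, Cφ * Cψ * 3 ^ N * W * (1 + Q * ‖t‖) ^ (-(3:ℝ)) :=
        integral_mono_of_nonneg (Eventually.of_forall fun t => by positivity)
          (hint.const_mul _) (Eventually.of_forall hpt)
    _ = Cφ * Cψ * 3 ^ N * I * (Q ^ 2)⁻¹ * W := by
        rw [integral_const_mul, integral_one_add_mul_norm_rpow_neg volume hQ.le,
          finrank_euclideanSpace_fin]
        ring

lemma exists_norm_convolution_fj_dilA_le (ψ φ : 𝓢(V2, ℂ)) {N : ℝ} (hN : 0 ≤ N) :
    ∃ K, 0 ≤ K ∧ ∀ (s : ℕ → ℂ) (j : ℕ) (ℓ : ℤ), |(ℓ:ℝ)| ≤ 2 ^ j → ∀ x : V2,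
      ‖convolution (fj (fun y => φ y) s j) (dilA (fun y => ψ y) j ℓ)
          (ContinuousLinearMap.mul ℂ ℂ) volume x‖ ≤
        K * ‖s j‖ * 2 ^ j * (1 + 2 ^ j * ‖x‖) ^ (-N) := by
  obtain ⟨K, hK, hKb⟩ := exists_integral_norm_mul_norm_BA_le ψ φ hN
  refine ⟨K, hK, fun s j ℓ hℓ x => ?_⟩
  set Q : ℝ := 2 ^ (2 * j)
  have hQ : 0 < Q := by positivity
  have hscale : Q * (8:ℝ) ^ j = 2 ^ j * Q ^ 2 := by
    rw [show (8:ℝ) = 2 ^ 3 by norm_num, ← pow_mul, ← pow_mul, ← pow_add, ← pow_add]; ring_nf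
  have hnorm : ∀ t, ‖(ContinuousLinearMap.mul ℂ ℂ) (fj (fun y => φ y) s j t)
      (dilA (fun y => ψ y) j ℓ (x - t))‖ =
        ‖s j‖ * Q * 8 ^ j * (‖φ (Q • t)‖ * ‖ψ (BA j ℓ (x - t))‖) := fun t => by
    simp only [ContinuousLinearMap.mul_apply', fj, dilA, norm_mul, Complex.norm_real,
      Real.norm_eq_abs, abs_pow, Nat.abs_ofNat, Q]
    ring
  calc _ ≤ ∫ t, ‖(ContinuousLinearMap.mul ℂ ℂ) (fj (fun y => φ y) s j t)
          (dilA (fun y => ψ y) j ℓ (x - t))‖ := by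
        rw [convolution_def]; exact norm_integral_le_integral_norm _
    _ = ‖s j‖ * Q * 8 ^ j * ∫ t, ‖φ (Q • t)‖ * ‖ψ (BA j ℓ (x - t))‖ := by
        simp only [hnorm, integral_const_mul]
    _ ≤ ‖s j‖ * Q * 8 ^ j * (K * (Q ^ 2)⁻¹ * (1 + 2 ^ j * ‖x‖) ^ (-N)) := by
        gcongr; exact hKb j ℓ hℓ x
    _ = K * ‖s j‖ * 2 ^ j * (1 + 2 ^ j * ‖x‖) ^ (-N) := by
        rw [mul_assoc _ Q, hscale]; field_simp

lemma normQ_nonneg (ψ φ : V2 → ℂ) (s : ℕ → ℂ) (α2 q2 p2 : ℝ) (j : ℕ) :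
    0 ≤ normQ ψ φ s α2 q2 p2 j := by
  unfold normQ; positivity

lemma card_Icc_neg_two_pow_le (j : ℕ) :
    ((Finset.Icc (-(2:ℤ) ^ j) (2 ^ j)).card : ℝ) ≤ 3 * 2 ^ j := by
  have h : ((Finset.Icc (-(2:ℤ) ^ j) (2 ^ j)).card : ℤ) = 2 * 2 ^ j + 1 := by
    rw [Int.card_Icc_of_le _ _ (by linarith [pow_pos (two_pos (α := ℤ)) j])]; ring
  have h' : ((Finset.Icc (-(2:ℤ) ^ j) (2 ^ j)).card : ℝ) = 2 * 2 ^ j + 1 := by exact_mod_cast h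
  rw [h']
  linarith [one_le_pow₀ (M₀ := ℝ) (a := 2) one_le_two (n := j)]

lemma exists_normQ_le (ψ φ : 𝓢(V2, ℂ)) (s : ℕ → ℂ) (α2 : ℝ) {q2 p2 : ℝ} (hq2 : 0 < q2)
    (hp2 : 0 < p2) :
    ∃ K, 0 ≤ K ∧ ∀ j : ℕ, normQ (fun y => ψ y) (fun y => φ y) s α2 q2 p2 j ≤
      K * ‖s j‖ * (2:ℝ) ^ ((j:ℝ) * (3 * α2 + 1 / q2 + 1 - 2 / p2)) := by
  set N : ℝ := 2 / p2 + 1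
  have hNp : (finrank ℝ V2 : ℝ) < N * p2 := by
    rw [finrank_euclideanSpace_fin]
    simp only [N, add_mul, div_mul_cancel₀ _ hp2.ne']
    push_cast; linarith
  obtain ⟨K, hK, hKb⟩ := exists_norm_convolution_fj_dilA_le ψ φ (N := N) (by positivity)
  set I := ∫ x : V2, (1 + ‖x‖) ^ (-(N * p2))
  refine ⟨3 ^ (1 / q2) * K * I ^ (1 / p2), by positivity, fun j => ?_⟩
  set P : ℝ := 2 ^ j
  set S := Finset.Icc (-(2:ℤ) ^ j) (2 ^ j)
  set b := (2:ℝ) ^ (3 * (j:ℝ) * α2) * (K * ‖s j‖ * P)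
  have hterm : ∀ ℓ ∈ S, ∀ x : V2,
      (2:ℝ) ^ (3 * (j:ℝ) * α2) * ‖convolution (fj (fun y => φ y) s j) (dilA (fun y => ψ y) j ℓ)
          (ContinuousLinearMap.mul ℂ ℂ) volume x‖ ≤ b * (1 + P * ‖x‖) ^ (-N) := by
    intro ℓ hℓ x
    have hℓ' : |(ℓ:ℝ)| ≤ 2 ^ j := by
      rw [abs_le]; exact_mod_cast Finset.mem_Icc.1 hℓ
    calc _ ≤ (2:ℝ) ^ (3 * (j:ℝ) * α2) * (K * ‖s j‖ * P * (1 + P * ‖x‖) ^ (-N)) := by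
          gcongr; exact hKb s j ℓ hℓ' x
      _ = b * (1 + P * ‖x‖) ^ (-N) := by ring
  have hinner : ∀ x : V2, (∑ ℓ ∈ S, ((2:ℝ) ^ (3 * (j:ℝ) * α2) *
      ‖convolution (fj (fun y => φ y) s j) (dilA (fun y => ψ y) j ℓ)
          (ContinuousLinearMap.mul ℂ ℂ) volume x‖) ^ q2) ^ (1 / q2) ≤
        (3 * P) ^ (1 / q2) * b * (1 + P * ‖x‖) ^ (-N) := by
    intro x
    calc _ ≤ (S.card : ℝ) ^ (1 / q2) * (b * (1 + P * ‖x‖) ^ (-N)) :=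
          rpow_sum_rpow_le S hq2 (fun _ _ => by positivity) (fun ℓ hℓ => hterm ℓ hℓ x)
            (by positivity)
      _ ≤ _ := by rw [← mul_assoc]; gcongr; exact card_Icc_neg_two_pow_le j
  have hP : P = 2 ^ (j:ℝ) := (Real.rpow_natCast 2 j).symm
  have hPq : P ^ (1 / q2) = 2 ^ ((j:ℝ) * (1 / q2)) := by
    rw [hP, ← Real.rpow_mul zero_le_two]
  have hPp : ((P ^ 2)⁻¹) ^ (1 / p2) = 2 ^ ((j:ℝ) * (-2 / p2)) := by
    rw [hP, ← Real.rpow_natCast, ← Real.rpow_mul zero_le_two, ← Real.rpow_neg zero_le_two,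
      ← Real.rpow_mul zero_le_two]
    ring_nf
  have htwo_pow : (2:ℝ) ^ ((j:ℝ) * (3 * α2 + 1 / q2 + 1 - 2 / p2)) =
      2 ^ (3 * (j:ℝ) * α2) * 2 ^ ((j:ℝ) * (1 / q2)) * 2 ^ (j:ℝ) * 2 ^ ((j:ℝ) * (-2 / p2)) := by
    rw [← Real.rpow_add two_pos, ← Real.rpow_add two_pos, ← Real.rpow_add two_pos]
    ring_nf
  have hmixed := rpow_integral_rpow_le volume (fun x => by positivity) (by positivity)
    (by positivity) hp2 hNp hinner
  rw [finrank_euclideanSpace_fin] at hmixed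
  calc normQ (fun y => ψ y) (fun y => φ y) s α2 q2 p2 j
      ≤ (3 * P) ^ (1 / q2) * b * ((P ^ 2)⁻¹ * I) ^ (1 / p2) := hmixed
    _ = _ := by
        rw [Real.mul_rpow (by norm_num) (by positivity), Real.mul_rpow (by positivity)
          (by positivity), hPq, hPp, htwo_pow]
        simp only [b, hP]
        ring

theorem stmt16_general (α1 α2 q2 p1 p2 : ℝ) (hq2 : 0 < q2) (hp2 : 0 < p2)
    (hexp : 2*α1 - 4/p1 > 3*α2 + 1/q2 - 1/p2)
    (ψ φ : SchwartzMap V2 ℂ) (s : ℕ → ℂ)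
    (hs : ∀ j : ℕ, ‖s j‖ = (2:ℝ) ^ (-(4*(j:ℝ)) * (α1/2 - 1/p1 + 1/2))) :
    (∃ C > 0, ∀ j : ℕ,
        normQ (fun y => ψ y) (fun y => φ y) s α2 q2 p2 j ≤
          C * (2:ℝ) ^ ((j:ℝ) * (3*α2 - 2*α1 + 4/p1 + 1/q2 - 1/p2))) ∧
      Tendsto (fun j : ℕ => normQ (fun y => ψ y) (fun y => φ y) s α2 q2 p2 j)
        atTop (nhds 0) := by
  set e := 3*α2 - 2*α1 + 4/p1 + 1/q2 - 1/p2
  obtain ⟨K, hK, hKb⟩ := exists_normQ_le ψ φ s α2 hq2 hp2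
  have hbound : ∀ j : ℕ, normQ (fun y => ψ y) (fun y => φ y) s α2 q2 p2 j ≤
      (K + 1) * (2:ℝ) ^ ((j:ℝ) * e) := fun j => by
    calc _ ≤ K * ‖s j‖ * (2:ℝ) ^ ((j:ℝ) * (3 * α2 + 1 / q2 + 1 - 2 / p2)) := hKb j
      _ = K * (2:ℝ) ^ ((j:ℝ) * (e - 1 - 1 / p2)) := by
        rw [hs, mul_assoc, ← Real.rpow_add two_pos]; simp only [e]; ring_nf
      _ ≤ (K + 1) * (2:ℝ) ^ ((j:ℝ) * e) := by
        have hexp_le : (j:ℝ) * (e - 1 - 1 / p2) ≤ j * e := mul_le_mul_of_nonneg_left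
          (by linarith [one_div_pos.2 hp2]) (Nat.cast_nonneg j)
        exact mul_le_mul (by linarith) (Real.rpow_le_rpow_of_exponent_le one_le_two hexp_le)
          (by positivity) (by positivity)
  refine ⟨⟨K + 1, by positivity, hbound⟩, squeeze_zero (normQ_nonneg _ _ _ _ _ _) hbound ?_⟩
  simpa using (tendsto_two_rpow_natCast_mul_nhds_zero (a := e) (by linarith)).const_mul (K + 1)

/-- with `|s_{2j,0}| = 2^(-4j(α₁/2 − 1/p₁ + 1/2))` and
`2α₁ − 4/p₁ > 3α₂ + 1/q₂ − 1/p₂`, the `F^{α₂,q₂}_{p₂}(AB)`-type quantity of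
`f^(2j)` is bounded by `C 2^{j(3α₂ − 2α₁ + 4/p₁ + 1/q₂ − 1/p₂)}` and tends to `0`. -/
theorem stmt16 (α1 α2 q2 p1 p2 : ℝ) (hq2 : 0 < q2) (hp1 : 0 < p1) (hp2 : 0 < p2)
    (hexp : 2*α1 - 4/p1 > 3*α2 + 1/q2 - 1/p2)
    (ψ φ : SchwartzMap V2 ℂ) (s : ℕ → ℂ)
    (hs : ∀ j : ℕ, ‖s j‖ = (2:ℝ) ^ (-(4*(j:ℝ)) * (α1/2 - 1/p1 + 1/2))) :
    (∃ C > 0, ∀ j : ℕ,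
        normQ (fun y => ψ y) (fun y => φ y) s α2 q2 p2 j ≤
          C * (2:ℝ) ^ ((j:ℝ) * (3*α2 - 2*α1 + 4/p1 + 1/q2 - 1/p2))) ∧
      Tendsto (fun j : ℕ => normQ (fun y => ψ y) (fun y => φ y) s α2 q2 p2 j)
        atTop (nhds 0) :=
  stmt16_general α1 α2 q2 p1 p2 hq2 hp2 hexp ψ φ s hs
end
end
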